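/- arXiv:2305.12145 — 6 statements merged into one kernel-verified Lean document; each statement's English description precedes it below -/
import Mathlib

section
/- Let (K,v) be a valued field with value group isomorphic to ℤ, and let (L,w)/(K,v) be a finite extension which is totally ramified, i.e., [L:K] equals the ramification index (wL : vK). Then any uniformizer π of (L,w) generates L over K, and its minimal polynomial over the valuation ring O_v is an Eisenstein polynomial: all non-leading coefficients have positive valuation and the constant coefficient is a uniformizer of v. -/
open Polynomial Multiplicative WithZero

/-!
Measure values by their exponent in `ℤ`, so that `π` has exponent `-1` and the values of `K` have
exponents in `eℤ`. Then `a * π ^ i` has exponent `≡ -i (mod e)` for every nonzero `a ∈ K`, so the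
nonzero terms of `∑_{i<e} aᵢ πⁱ` have pairwise distinct values and the sum has the largest of them
as its value. Hence no nonzero polynomial of degree `< e` vanishes at `π`, the minimal polynomial
of `π` has degree `e = [L:K]`, and `π` generates `L`. Applied to `π^e = -∑_{i<e} cᵢ πⁱ`: every
term has exponent at most `-e`, which forces `w cᵢ < 1`, and the maximum is attained at an index
`i ≡ 0 (mod e)`, i.e. at `c₀`, so `c₀` has exponent `-e`.
-/

namespace Valuation

variable {R Γ₀ ι : Type*} [Ring R] [LinearOrderedCommGroupWithZero Γ₀] (v : Valuation R Γ₀)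

theorem map_sum_eq_sup_of_pairwise_ne {s : Finset ι} {f : ι → R}
    (hf : (s : Set ι).Pairwise fun i j => v (f i) ≠ 0 → v (f j) ≠ 0 → v (f i) ≠ v (f j)) :
    v (∑ i ∈ s, f i) = s.sup fun i => v (f i) := by
  induction s using Finset.cons_induction with
  | empty => simp [bot_eq_zero]
  | cons a s ha ih =>
    rw [Finset.coe_cons, Set.pairwise_insert] at hf
    rw [Finset.sum_cons, Finset.sup_cons, ← ih hf.1]
    by_cases hne : v (f a) = v (∑ i ∈ s, f i)
    · have ha0 : v (f a) = 0 := by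
        by_contra ha0
        have hsum : ∑ i ∈ s, f i ≠ 0 := fun h => ha0 (by rw [hne, h, map_zero])
        obtain ⟨j, hj, hsup⟩ :=
          Finset.exists_mem_eq_sup s (Finset.nonempty_of_sum_ne_zero hsum) fun i => v (f i)
        rw [ih hf.1, hsup] at hne
        exact (hf.2 j hj fun h => ha (h ▸ hj)).1 ha0 (hne ▸ ha0) hne
      rw [v.map_add_of_left_eq_zero ha0, ← hne, ha0, max_self]
    · exact v.map_add_of_distinct_val hne

end Valuation

theorem eq_of_mul_sub_eq_mul_sub_of_lt {e i j : ℕ} {k l : ℤ} (hi : i < e) (hj : j < e)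
    (h : e * k - i = e * l - j) : i = j := by
  have hdvd : (e : ℤ) ∣ (i : ℤ) - j := ⟨k - l, by linarith⟩
  have := Int.eq_zero_of_abs_lt_dvd hdvd (by rw [abs_lt]; omega)
  omega

section TotallyRamified

variable {K L : Type*} [Field K] [Field L] [Algebra K L] {w : Valuation L ℤᵐ⁰} {e : ℕ} {π : L}

theorem valuation_mul_pow_eq (hπ : w π = exp (-1)) {x : L} {k : ℤ} (hx : w x = exp k) (i : ℕ) :
    w (x * π ^ i) = exp (k - i) := by
  rw [map_mul, hx, map_pow, hπ, ← exp_nsmul, ← exp_add, sub_eq_add_neg, nsmul_eq_mul, mul_neg_one]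

theorem valuation_sum_range_mul_pow_eq_sup
    (hK : ∀ x : K, x ≠ 0 → ∃ k : ℤ, w (algebraMap K L x) = exp (e * k))
    (hπ : w π = exp (-1)) (c : ℕ → K) :
    w (∑ i ∈ Finset.range e, algebraMap K L (c i) * π ^ i) =
      (Finset.range e).sup fun i => w (algebraMap K L (c i) * π ^ i) := by
  refine w.map_sum_eq_sup_of_pairwise_ne fun i hi j hj hij hwi hwj hw => hij ?_
  obtain ⟨k, hk⟩ := hK (c i) fun h => hwi (by simp [h])
  obtain ⟨l, hl⟩ := hK (c j) fun h => hwj (by simp [h])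
  rw [valuation_mul_pow_eq hπ hk, valuation_mul_pow_eq hπ hl, exp_inj] at hw
  exact eq_of_mul_sub_eq_mul_sub_of_lt (by simpa using hi) (by simpa using hj) hw

theorem eq_zero_of_sum_range_mul_pow_eq_zero
    (hK : ∀ x : K, x ≠ 0 → ∃ k : ℤ, w (algebraMap K L x) = exp (e * k))
    (hπ : w π = exp (-1)) {c : ℕ → K}
    (hc : ∑ i ∈ Finset.range e, algebraMap K L (c i) * π ^ i = 0) {i : ℕ} (hi : i < e) :
    c i = 0 := by
  have hsup := valuation_sum_range_mul_pow_eq_sup hK hπ c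
  rw [hc, map_zero] at hsup
  have hle : w (algebraMap K L (c i) * π ^ i) ≤ 0 :=
    hsup ▸ Finset.le_sup (f := fun i => w (algebraMap K L (c i) * π ^ i)) (Finset.mem_range.2 hi)
  have hπ0 : π ≠ 0 := w.ne_zero_iff.1 (hπ ▸ exp_ne_zero)
  simpa [hπ0] using le_zero_iff.1 hle

theorem natDegree_minpoly_eq [FiniteDimensional K L]
    (hK : ∀ x : K, x ≠ 0 → ∃ k : ℤ, w (algebraMap K L x) = exp (e * k))
    (hπ : w π = exp (-1)) (he : Module.finrank K L = e) :
    (minpoly K π).natDegree = e := by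
  have hint : IsIntegral K π := .of_finite K π
  refine le_antisymm (he ▸ minpoly.natDegree_le π) (not_lt.1 fun hlt => ?_)
  have hroot := minpoly.aeval K π
  simp only [aeval_eq_sum_range' hlt, Algebra.smul_def] at hroot
  exact (minpoly.monic hint).ne_zero <| Polynomial.ext fun i =>
    if hi : i < e then eq_zero_of_sum_range_mul_pow_eq_zero hK hπ hroot hi
    else coeff_eq_zero_of_natDegree_lt (hlt.trans_le (not_lt.1 hi))

theorem sup_valuation_coeff_mul_pow_eq
    (hK : ∀ x : K, x ≠ 0 → ∃ k : ℤ, w (algebraMap K L x) = exp (e * k))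
    (hπ : w π = exp (-1)) {p : K[X]} (hp : p.Monic) (hdeg : p.natDegree = e)
    (hroot : aeval π p = 0) :
    ((Finset.range e).sup fun i => w (algebraMap K L (p.coeff i) * π ^ i)) = exp (-(e : ℤ)) := by
  have hlead : p.coeff e = 1 := hdeg ▸ hp.coeff_natDegree
  rw [aeval_eq_sum_range, hdeg, Finset.sum_range_succ, hlead, one_smul] at hroot
  simp only [Algebra.smul_def] at hroot
  rw [← valuation_sum_range_mul_pow_eq_sup hK hπ, eq_neg_of_add_eq_zero_left hroot,
    Valuation.map_neg, map_pow, hπ, ← exp_nsmul, nsmul_eq_mul, mul_neg_one]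

theorem valuation_coeff_lt_one
    (hK : ∀ x : K, x ≠ 0 → ∃ k : ℤ, w (algebraMap K L x) = exp (e * k))
    (hπ : w π = exp (-1)) {p : K[X]} (hp : p.Monic) (hdeg : p.natDegree = e)
    (hroot : aeval π p = 0) {i : ℕ} (hi : i < e) :
    w (algebraMap K L (p.coeff i)) < 1 := by
  rcases eq_or_ne (p.coeff i) 0 with h0 | h0
  · simp [h0]
  obtain ⟨k, hk⟩ := hK _ h0
  have hle := sup_valuation_coeff_mul_pow_eq hK hπ hp hdeg hroot ▸
    Finset.le_sup (f := fun i => w (algebraMap K L (p.coeff i) * π ^ i)) (Finset.mem_range.2 hi)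
  rw [valuation_mul_pow_eq hπ hk, exp_le_exp] at hle
  rw [hk, ← exp_zero, exp_lt_exp]
  omega

theorem valuation_coeff_zero_eq
    (hK : ∀ x : K, x ≠ 0 → ∃ k : ℤ, w (algebraMap K L x) = exp (e * k))
    (hπ : w π = exp (-1)) {p : K[X]} (hp : p.Monic) (hdeg : p.natDegree = e)
    (hroot : aeval π p = 0) :
    w (algebraMap K L (p.coeff 0)) = exp (-(e : ℤ)) := by
  have hsup := sup_valuation_coeff_mul_pow_eq hK hπ hp hdeg hroot
  have hne : (Finset.range e).Nonempty := Finset.nonempty_iff_ne_empty.2 fun h =>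
    exp_ne_zero (by rw [← hsup, h, Finset.sup_empty, bot_eq_zero])
  obtain ⟨j, hj, hmax⟩ := Finset.exists_mem_eq_sup _ hne
    fun i => w (algebraMap K L (p.coeff i) * π ^ i)
  rw [hsup] at hmax
  have hcj : p.coeff j ≠ 0 := fun h => exp_ne_zero (by rw [hmax, h]; simp)
  obtain ⟨k, hk⟩ := hK _ hcj
  rw [valuation_mul_pow_eq hπ hk, exp_inj] at hmax
  obtain rfl : 0 = j := eq_of_mul_sub_eq_mul_sub_of_lt (k := -1) (l := k)
    (Finset.nonempty_range_iff.1 hne |>.bot_lt) (Finset.mem_range.1 hj) (by simpa using hmax)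
  rw [hk, hmax, Nat.cast_zero, sub_zero]

end TotallyRamified

theorem uniformizer_generates_and_eisenstein_general
    {K L : Type*} [Field K] [Field L] [Algebra K L] [FiniteDimensional K L]
    (w : Valuation L (WithZero (Multiplicative ℤ)))
    (e : ℕ) (he : Module.finrank K L = e)
    (hTR : ∀ x : K, x ≠ 0 → ∃ k : ℤ,
      w (algebraMap K L x) = (ofAdd ((e : ℤ) * k) : Multiplicative ℤ))
    (π : L) (hπ : w π = ((ofAdd (-1 : ℤ) : Multiplicative ℤ) : WithZero (Multiplicative ℤ))) :
    Algebra.adjoin K {π} = ⊤ ∧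
    (minpoly K π).Monic ∧
    (∀ i < (minpoly K π).natDegree,
      w (algebraMap K L ((minpoly K π).coeff i)) < 1) ∧
    w (algebraMap K L ((minpoly K π).coeff 0)) =
      ((ofAdd (-(e : ℤ)) : Multiplicative ℤ) : WithZero (Multiplicative ℤ)) := by
  have hint : IsIntegral K π := .of_finite K π
  have hdeg : (minpoly K π).natDegree = e := natDegree_minpoly_eq hTR hπ he
  refine ⟨Algebra.adjoin_eq_top_of_primitive_element hint.isAlgebraic
      ((Field.primitive_element_iff_minpoly_natDegree_eq K π).2 (hdeg.trans he.symm)),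
    minpoly.monic hint, fun i hi => ?_, ?_⟩
  · exact valuation_coeff_lt_one hTR hπ (minpoly.monic hint) hdeg (minpoly.aeval K π) (hdeg ▸ hi)
  · exact valuation_coeff_zero_eq hTR hπ (minpoly.monic hint) hdeg (minpoly.aeval K π)

/-- **Uniformizers of totally ramified extensions are Eisenstein generators**
(Lemma `lem:eisenstein-generator`).  Let `(L,w)` be a valued field with value group `ℤ`
(`w` surjective onto `WithZero (Multiplicative ℤ)`) and let `K ⊆ L` be a subfield such
that `L/K` is a finite totally ramified extension of degree `e`, i.e. the value group of
`K` is `eℤ` (so `[L:K] = (wL : vK)`).  Then any uniformizer `π` of `(L,w)` generates `L`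
over `K`, and its minimal polynomial is Eisenstein over `𝒪_v`: it is monic, all
non-leading coefficients have positive valuation (`w < 1`) and the constant coefficient
is a uniformizer of `v = w|_K` (its value is `-e`, the minimal positive value of `vK`). -/
theorem uniformizer_generates_and_eisenstein
    {K L : Type*} [Field K] [Field L] [Algebra K L] [FiniteDimensional K L]
    (w : Valuation L (WithZero (Multiplicative ℤ))) (hsurj : Function.Surjective w)
    (e : ℕ) (he : Module.finrank K L = e)
    (hTR : ∀ x : K, x ≠ 0 → ∃ k : ℤ,
      w (algebraMap K L x) = (ofAdd ((e : ℤ) * k) : Multiplicative ℤ))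
    (π : L) (hπ : w π = ((ofAdd (-1 : ℤ) : Multiplicative ℤ) : WithZero (Multiplicative ℤ))) :
    Algebra.adjoin K {π} = ⊤ ∧
    (minpoly K π).Monic ∧
    (∀ i < (minpoly K π).natDegree,
      w (algebraMap K L ((minpoly K π).coeff i)) < 1) ∧
    w (algebraMap K L ((minpoly K π).coeff 0)) =
      ((ofAdd (-(e : ℤ)) : Multiplicative ℤ) : WithZero (Multiplicative ℤ)) :=
  uniformizer_generates_and_eisenstein_general w e he hTR π hπ
end

section
/- Let A be a discrete valuation ring of mixed characteristic (0,p) in which p is a uniformizer (i.e., A is unramified). For any Eisenstein polynomial f ∈ A[X] of degree e, the discriminant Δ_f of f does not lie in the ideal (p^{d(e)}), where d(e) = e(1 + v_p(e)) and v_p denotes the p-adic valuation on the integers. -/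
open Polynomial

/-- `d(e) = e(1 + v_p(e))`. -/
def dEis (p e : ℕ) : ℕ := e * (1 + padicValNat p e)

/-!
Write `f = X^e + p g`; the Eisenstein condition makes `g(0)` a unit. Since `π^e ∈ pB`, `π` lies in
every maximal ideal of the integral extension `B`, so `g(π)` is a unit, `p` is associated to
`π^e`, and every element of `B = A[π]` not divisible by `π` is a unit. In the power basis
`1, π, …, π^(e-1)` the top coordinate of `f'(π)` is `e`, which `p^(k+1)` does not divide for
`k = v_p(e)`; hence `π^(e(k+1)) ∤ f'(π)`, i.e. `f'(π) = π^m u` with `m < e(k+1)` and `u` a unit.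
Taking norms, `N(f'(π))^e` is associated to `p^(me)`, which `p^(e(k+1)e)` does not divide.
-/

open IsLocalRing

theorem Polynomial.IsEisensteinAt.exists_eq_X_pow_add_C_mul {A : Type*} [CommRing A] {a : A}
    {f : A[X]} (hf : f.IsEisensteinAt (Ideal.span {a})) (hmonic : f.Monic)
    (hdeg : f.natDegree ≠ 0) :
    ∃ g : A[X], f = X ^ f.natDegree + C a * g ∧ g.coeff 0 ∉ Ideal.span {a} := by
  have hdvd : C a ∣ f - X ^ f.natDegree := by
    refine C_dvd_iff_dvd_coeff _ _ |>.mpr fun i => ?_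
    rcases eq_or_ne i f.natDegree with rfl | hi
    · simp [hmonic.coeff_natDegree]
    · simpa [coeff_X_pow, hi, Ideal.mem_span_singleton] using hf.coeff_mem hi
  obtain ⟨g, hg⟩ := hdvd
  have hf0 : f.coeff 0 = a * g.coeff 0 := by
    simpa [coeff_X_pow, Ne.symm hdeg, sub_eq_iff_eq_add] using congrArg (coeff · 0) hg
  refine ⟨g, by linear_combination hg, fun hg0 => hf.notMem ?_⟩
  obtain ⟨c, hc⟩ := Ideal.mem_span_singleton.mp hg0
  rw [Ideal.span_singleton_pow, Ideal.mem_span_singleton, hf0, hc]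
  exact ⟨c, by ring⟩

theorem Polynomial.IsEisensteinAt.minpoly_eq {A B : Type*} [CommRing A] [IsDomain A]
    [IsIntegrallyClosed A] [CommRing B] [IsDomain B] [Algebra A B] [Module.IsTorsionFree A B]
    {P : Ideal A} [P.IsPrime] {f : A[X]} (hf : f.IsEisensteinAt P) (hmonic : f.Monic)
    (hdeg : f.natDegree ≠ 0) {x : B} (hx : aeval x f = 0) : minpoly A x = f := by
  have hint : IsIntegral A x := ⟨f, hmonic, hx⟩
  have hirr : Irreducible f := hf.irreducible ‹_› hmonic.isPrimitive (Nat.pos_of_ne_zero hdeg)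
  exact eq_of_monic_of_associated (minpoly.monic hint) hmonic <|
    (minpoly.prime_of_isIntegrallyClosed hint).irreducible.associated_of_dvd hirr
      (minpoly.isIntegrallyClosed_dvd hint hx)

theorem PowerBasis.basis_repr_aeval_gen {A B : Type*} [CommRing A] [Ring B] [Algebra A B]
    (pb : PowerBasis A B) {q : A[X]} (hq : q.natDegree < pb.dim) (i : Fin pb.dim) :
    pb.basis.repr (aeval pb.gen q) i = q.coeff i := by
  rw [aeval_eq_sum_range' hq, ← Fin.sum_univ_eq_sum_range (fun i => q.coeff i • pb.gen ^ i)]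
  simp only [← pb.basis_eq_pow, pb.basis.repr_sum_self]

theorem Module.Basis.dvd_repr_of_algebraMap_dvd {ι A B : Type*} [CommRing A] [CommRing B]
    [Algebra A B] (b : Module.Basis ι A B) {a : A} {y : B} (h : algebraMap A B a ∣ y) (i : ι) :
    a ∣ b.repr y i := by
  obtain ⟨z, rfl⟩ := h
  rw [← Algebra.smul_def, map_smul, Finsupp.smul_apply, smul_eq_mul]
  exact dvd_mul_right _ _

theorem associated_norm_pow_mul_unit_pow {ι A B : Type*} [Fintype ι] [CommRing A] [CommRing B]
    [Algebra A B] (b : Module.Basis ι A B) {a : A} {x : B} {n : ℕ}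
    (hx : Associated (algebraMap A B a) (x ^ n)) (m : ℕ) (u : Bˣ) :
    Associated (Algebra.norm A (x ^ m * u) ^ n) (a ^ (m * Fintype.card ι)) := by
  have h : Associated ((x ^ m * u) ^ n) (algebraMap A B (a ^ m)) := by
    rw [mul_pow, ← pow_mul, mul_comm m n, pow_mul, map_pow]
    exact ((hx.pow_pow (n := m)).symm.mul_right _).trans
      (associated_mul_unit_left _ _ (u ^ n).isUnit)
  rw [← map_pow, pow_mul, ← Algebra.norm_algebraMap_of_basis b]
  exact h.map _

theorem not_pow_padicValNat_succ_dvd_natCast {A : Type*} [CommRing A] [IsDomain A] {p : ℕ}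
    (hp : p.Prime) (hpA : Irreducible (p : A)) {e : ℕ} (he : e ≠ 0) :
    ¬ (p : A) ^ (padicValNat p e + 1) ∣ (e : A) := by
  have := Fact.mk hp
  have hsucc := pow_succ_padicValNat_not_dvd (p := p) he
  obtain ⟨n, hn⟩ := pow_padicValNat_dvd (p := p) (n := e)
  generalize padicValNat p e = k at hsucc hn ⊢
  have hpn : ¬ p ∣ n := fun ⟨c, hc⟩ => hsucc ⟨c, by rw [hn, hc, pow_succ, mul_assoc]⟩
  have hcop : IsCoprime (n : A) p := (Nat.coprime_comm.mp (hp.coprime_iff_not_dvd.mpr hpn)).cast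
  rw [hn, Nat.cast_mul, Nat.cast_pow, pow_succ, mul_dvd_mul_iff_left (pow_ne_zero _ hpA.ne_zero)]
  exact fun h => hpA.not_isUnit (hcop.isUnit_of_dvd' h dvd_rfl)

theorem mem_jacobson_bot_of_pow_mem_map_maximalIdeal {A B : Type*} [CommRing A] [IsLocalRing A]
    [CommRing B] [Algebra A B] [Algebra.IsIntegral A B] {x : B} {n : ℕ}
    (hx : x ^ n ∈ (maximalIdeal A).map (algebraMap A B)) : x ∈ (⊥ : Ideal B).jacobson := by
  refine Ideal.mem_sInf.mpr fun M ⟨_, hM⟩ => hM.isPrime.mem_of_pow_mem n ?_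
  have hcomap : M.comap (algebraMap A B) = maximalIdeal A :=
    eq_maximalIdeal (Ideal.isMaximal_comap_of_isIntegral_of_isMaximal M)
  exact Ideal.map_le_iff_le_comap.mpr hcomap.ge hx

theorem isUnit_aeval_of_isUnit_coeff_zero {A B : Type*} [CommRing A] [CommRing B] [Algebra A B]
    {x : B} (hx : x ∈ (⊥ : Ideal B).jacobson) {g : A[X]} (hg : IsUnit (g.coeff 0)) :
    IsUnit (aeval x g) := by
  obtain ⟨u, hu⟩ := hg.map (algebraMap A B)
  have h : aeval x g = u * (x * (u⁻¹ * aeval x g.divX) + 1) := by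
    conv_lhs => rw [← X_mul_divX_add g]
    rw [map_add, map_mul, aeval_X, aeval_C, ← hu, mul_add, mul_one, mul_left_comm,
      Units.mul_inv_cancel_left, add_comm]
  rw [h]
  exact u.isUnit.mul (Ideal.mem_jacobson_bot.mp hx _)

theorem isUnit_of_not_dvd_of_adjoin_eq_top {A B : Type*} [CommRing A] [IsLocalRing A] [CommRing B]
    [Algebra A B] {x : B} (hgen : Algebra.adjoin A {x} = ⊤) (hx : x ∈ (⊥ : Ideal B).jacobson)
    {ϖ : A} (hϖ : maximalIdeal A = Ideal.span {ϖ}) (hxϖ : x ∣ algebraMap A B ϖ) {y : B}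
    (hy : ¬ x ∣ y) : IsUnit y := by
  obtain ⟨g, rfl⟩ : ∃ g : A[X], aeval x g = y := by
    simpa [Algebra.adjoin_singleton_eq_range_aeval] using hgen.ge (Algebra.mem_top (x := y))
  by_cases hg : IsUnit (g.coeff 0)
  · exact isUnit_aeval_of_isUnit_coeff_zero hx hg
  · refine absurd ?_ hy
    rw [← X_mul_divX_add g, map_add, map_mul, aeval_X, aeval_C]
    have hϖg : ϖ ∣ g.coeff 0 := Ideal.mem_span_singleton.mp (hϖ ▸ (mem_maximalIdeal _).mpr hg)
    exact dvd_add (dvd_mul_right _ _) (hxϖ.trans (map_dvd _ hϖg))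

theorem exists_lt_eq_pow_mul_unit_of_not_pow_dvd {M : Type*} [CommMonoid M] {x : M}
    (hunit : ∀ y, ¬ x ∣ y → IsUnit y) {n : ℕ} {y : M} (hy : ¬ x ^ n ∣ y) :
    ∃ m < n, ∃ u : Mˣ, y = x ^ m * u := by
  induction n generalizing y with
  | zero => exact absurd (pow_zero x ▸ one_dvd y) hy
  | succ n ih =>
    by_cases hxy : x ∣ y
    · obtain ⟨z, rfl⟩ := hxy
      obtain ⟨m, hm, u, rfl⟩ := ih (y := z) fun h => hy (pow_succ' x n ▸ mul_dvd_mul_left x h)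
      exact ⟨m + 1, by omega, u, by rw [pow_succ', mul_assoc]⟩
    · obtain ⟨u, rfl⟩ := hunit y hxy
      exact ⟨0, n.succ_pos, u, by rw [pow_zero, one_mul]⟩

theorem PowerBasis.not_pow_dvd_aeval_derivative {A B : Type*} [CommRing A] [CommRing B]
    [Algebra A B] (pb : PowerBasis A B) {f : A[X]} (hmonic : f.Monic)
    (hdim : pb.dim = f.natDegree) (hdeg : f.natDegree ≠ 0) {ϖ : A}
    (hassoc : Associated (algebraMap A B ϖ) (pb.gen ^ f.natDegree)) {t : ℕ}
    (ht : ¬ ϖ ^ t ∣ (f.natDegree : A)) :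
    ¬ pb.gen ^ (f.natDegree * t) ∣ aeval pb.gen (derivative f) := by
  intro h
  have hϖ : algebraMap A B (ϖ ^ t) ∣ aeval pb.gen (derivative f) := by
    rw [map_pow]
    exact (hassoc.pow_pow (n := t)).dvd.trans (pow_mul pb.gen _ t ▸ h)
  have htop : (derivative f).coeff (f.natDegree - 1) = f.natDegree := by
    rw [coeff_derivative, Nat.sub_add_cancel (Nat.pos_of_ne_zero hdeg), hmonic.coeff_natDegree,
      one_mul, ← Nat.cast_add_one, Nat.sub_add_cancel (Nat.pos_of_ne_zero hdeg)]
  have hlt : (derivative f).natDegree < pb.dim := hdim ▸ natDegree_derivative_lt hdeg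
  apply ht
  have := pb.basis.dvd_repr_of_algebraMap_dvd hϖ ⟨f.natDegree - 1, by omega⟩
  rwa [pb.basis_repr_aeval_gen hlt, htop] at this

namespace Polynomial.IsEisensteinAt

variable {A B : Type*} [CommRing A] [IsLocalRing A] [CommRing B] [Algebra A B]
  [Algebra.IsIntegral A B] {f : A[X]} {π : B}

theorem mem_jacobson_bot_of_aeval_eq_zero (hf : f.IsEisensteinAt (maximalIdeal A))
    (hmonic : f.Monic) (hroot : aeval π f = 0) : π ∈ (⊥ : Ideal B).jacobson :=
  mem_jacobson_bot_of_pow_mem_map_maximalIdeal <|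
    hf.isWeaklyEisensteinAt.pow_natDegree_le_of_aeval_zero_of_monic_mem_map hroot hmonic _
      natDegree_map_le

theorem associated_algebraMap_pow_natDegree {ϖ : A} (hϖ : maximalIdeal A = Ideal.span {ϖ})
    (hf : f.IsEisensteinAt (maximalIdeal A)) (hmonic : f.Monic) (hdeg : f.natDegree ≠ 0)
    (hroot : aeval π f = 0) : Associated (algebraMap A B ϖ) (π ^ f.natDegree) := by
  obtain ⟨g, hfg, hg0⟩ := (hϖ ▸ hf).exists_eq_X_pow_add_C_mul hmonic hdeg
  have hg : IsUnit (aeval π g) :=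
    isUnit_aeval_of_isUnit_coeff_zero (hf.mem_jacobson_bot_of_aeval_eq_zero hmonic hroot)
      (by simpa [← hϖ] using hg0)
  have hπ : π ^ f.natDegree = algebraMap A B ϖ * -aeval π g := by
    rw [hfg, map_add, map_mul, map_pow, aeval_X, aeval_C] at hroot
    linear_combination hroot
  exact ⟨hg.neg.unit, hπ.symm⟩

end Polynomial.IsEisensteinAt

theorem eisenstein_discriminant_not_mem_general
    {A : Type*} [CommRing A] [IsDomain A] [IsDiscreteValuationRing A]
    (p : ℕ) (hp : p.Prime) (hpA : Irreducible (p : A))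
    (f : A[X]) (e : ℕ) (hdeg : f.natDegree = e) (hmonic : f.Monic)
    (hf : f.IsEisensteinAt (IsLocalRing.maximalIdeal A))
    {B : Type*} [CommRing B] [IsDomain B] [Algebra A B]
    [Module.Finite A B] [Module.Free A B]
    (π : B) (hroot : Polynomial.aeval π f = 0)
    (hgen : Algebra.adjoin A {π} = ⊤) :
    Algebra.norm A (Polynomial.aeval π (derivative f)) ∉
      Ideal.span {(p : A) ^ dEis p e} := by
  subst hdeg
  have he : f.natDegree ≠ 0 := fun h => by
    simp [hmonic.natDegree_eq_zero.mp h] at hroot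
  have hϖ : maximalIdeal A = Ideal.span {(p : A)} :=
    (IsDiscreteValuationRing.irreducible_iff_uniformizer _).mp hpA
  have hassoc := hf.associated_algebraMap_pow_natDegree (B := B) hϖ hmonic he hroot
  let pb := PowerBasis.ofAdjoinEqTop' ⟨f, hmonic, hroot⟩ hgen
  have hpb_gen : pb.gen = π := PowerBasis.ofAdjoinEqTop'_gen _ _
  have hdim : pb.dim = f.natDegree :=
    (PowerBasis.ofAdjoinEqTop'_dim _ _).trans (congrArg natDegree (hf.minpoly_eq hmonic he hroot))
  have hunit (y : B) : ¬ π ∣ y → IsUnit y :=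
    isUnit_of_not_dvd_of_adjoin_eq_top hgen (hf.mem_jacobson_bot_of_aeval_eq_zero hmonic hroot)
      hϖ ((dvd_pow_self π he).trans hassoc.symm.dvd)
  obtain ⟨m, hm, u, hu⟩ := exists_lt_eq_pow_mul_unit_of_not_pow_dvd hunit <|
    hpb_gen ▸ pb.not_pow_dvd_aeval_derivative hmonic hdim he (hpb_gen ▸ hassoc)
      (not_pow_padicValNat_succ_dvd_natCast hp hpA he)
  have hnorm := associated_norm_pow_mul_unit_pow pb.basis hassoc m u
  rw [Fintype.card_fin, hdim, ← hu] at hnorm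
  rw [Ideal.mem_span_singleton]
  intro hdvd
  have hle := (pow_dvd_pow_of_dvd hdvd f.natDegree).trans hnorm.dvd
  rw [← pow_mul, pow_dvd_pow_iff hpA.ne_zero hpA.not_isUnit, dEis, add_comm 1] at hle
  exact hm.not_ge (Nat.le_of_mul_le_mul_right hle (Nat.pos_of_ne_zero he))

/-- **Discriminant bound for Eisenstein polynomials** (Lemma `lem:disc-bound`).
Let `A` be an unramified discrete valuation ring of mixed characteristic `(0,p)`
(`p` a uniformizer of `A`).  For any Eisenstein polynomial `f ∈ A[X]` of degree `e`,
the discriminant of `f` does not lie in the ideal `(p^{d(e)})`, where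
`d(e) = e(1 + v_p(e))`.  (The discriminant is, up to sign, the norm `N_{B/A}(f'(π))`
where `B = A[π]` is generated by a root `π` of `f`.) -/
theorem eisenstein_discriminant_not_mem
    {A : Type*} [CommRing A] [IsDomain A] [IsDiscreteValuationRing A] [CharZero A]
    (p : ℕ) (hp : p.Prime) (hpA : Irreducible (p : A))
    (f : A[X]) (e : ℕ) (hdeg : f.natDegree = e) (hmonic : f.Monic)
    (hf : f.IsEisensteinAt (IsLocalRing.maximalIdeal A))
    {B : Type*} [CommRing B] [IsDomain B] [Algebra A B]
    [Module.Finite A B] [Module.Free A B]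
    (π : B) (hroot : Polynomial.aeval π f = 0)
    (hgen : Algebra.adjoin A {π} = ⊤) :
    Algebra.norm A (Polynomial.aeval π (derivative f)) ∉
      Ideal.span {(p : A) ^ dEis p e} :=
  eisenstein_discriminant_not_mem_general p hp hpA f e hdeg hmonic hf π hroot hgen
end

section
/- Let (K,v) be a valued field of mixed characteristic (0,p) with finite initial ramification e (i.e., the interval (0, v(p)] in the value group has exactly e elements), with residue field k and valuation ring O_v. Fix d ≥ 1. Then for each α in the set k^{(p^{de-1})} of (p^{de-1})-th powers of k, there is a unique element a in (O_v/p^d)^{(p^{de-1})} (the set of (p^{de-1})-th powers of the ring O_v/p^d) whose residue in k is α. -/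
/-!
Finite initial ramification `e` forces every product of `e` values `< 1` to be `≤ v p`:
otherwise its partial products would be `e` distinct elements of `(v p, 1)`, which together
with `v p` exceed the `e` elements of `[v p, 1)`.

If `b ≡ b' mod 𝔪`, then `b ^ p ^ n - b' ^ p ^ n` is `b - b'` times `n` further factors from `𝔪`,
because `x ^ p - y ^ p = (x - y) * ∑ xⁱ y^(p-1-i)` and the sum is `≡ p x^(p-1) ≡ 0 mod 𝔪`
when `x ≡ y`. For `n + 1 = d e` the `d e` factors of value `< 1` group into `d` blocks of `e`,
so the difference has value `≤ v(p)^d` and lies in `p^d 𝒪`. Finally two `p^(de-1)`-th powers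
with the same residue have bases congruent mod `𝔪`, as Frobenius is injective on the residue
field.
-/

open IsLocalRing

theorem Set.ncard_Ico_lt_ncard_Ico_of_lt {α : Type*} [Preorder α] {a b c : α} (hab : a < b)
    (hac : a < c) (hfin : (Set.Ico a c).Finite) : (Set.Ico b c).ncard < (Set.Ico a c).ncard :=
  Set.ncard_lt_ncard ((Set.ssubset_iff_of_subset (Set.Ico_subset_Ico_left hab.le)).2
    ⟨a, ⟨le_rfl, hac⟩, fun ha => hab.not_ge ha.1⟩) hfin

theorem List.prod_le_one' {M : Type*} [Monoid M] [Preorder M] [MulRightMono M]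
    [MulLeftMono M] {l : List M} (hl : ∀ x ∈ l, x ≤ 1) : l.prod ≤ 1 :=
  (List.prod_le_pow_card l 1 hl).trans_eq (one_pow _)

section OrderedGroup

variable {Γ₀ : Type*} [LinearOrderedCommGroupWithZero Γ₀]

theorem List.length_le_ncard_Ico_prod {l : List Γ₀} (hl : ∀ γ ∈ l, γ < 1) (h0 : l.prod ≠ 0)
    (hfin : (Set.Ico l.prod 1).Finite) : l.length ≤ (Set.Ico l.prod 1).ncard := by
  induction l with
  | nil => simp
  | cons a l ih =>
    rw [List.forall_mem_cons] at hl
    rw [List.prod_cons] at h0 hfin ⊢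
    have hlt : a * l.prod < l.prod :=
      mul_lt_of_lt_one_left (zero_lt_iff.2 (right_ne_zero_of_mul h0)) hl.1
    have hlen := ih hl.2 (right_ne_zero_of_mul h0)
      (hfin.subset (Set.Ico_subset_Ico_left hlt.le))
    have hcard := Set.ncard_Ico_lt_ncard_Ico_of_lt hlt
      (hlt.trans_le (List.prod_le_one' fun γ hγ => (hl.2 γ hγ).le)) hfin
    rw [List.length_cons]
    omega

theorem List.prod_le_of_length_eq_ncard_Ico {π : Γ₀} (hfin : (Set.Ico π 1).Finite)
    {l : List Γ₀} (hl : ∀ γ ∈ l, γ < 1) (hlen : l.length = (Set.Ico π 1).ncard) :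
    l.prod ≤ π := by
  by_contra! h
  have hle := List.length_le_ncard_Ico_prod hl (ne_zero_of_lt h)
    (hfin.subset (Set.Ico_subset_Ico_left h.le))
  have hlt := Set.ncard_Ico_lt_ncard_Ico_of_lt h
    (h.trans_le (List.prod_le_one' fun γ hγ => (hl γ hγ).le)) hfin
  omega

theorem List.prod_le_pow_of_length_eq_mul_ncard_Ico {π : Γ₀} (hfin : (Set.Ico π 1).Finite)
    (d : ℕ) {l : List Γ₀} (hl : ∀ γ ∈ l, γ < 1) (hlen : l.length = d * (Set.Ico π 1).ncard) :
    l.prod ≤ π ^ d := by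
  induction d generalizing l with
  | zero => simp_all
  | succ d ih =>
    rw [← l.take_append_drop (Set.Ico π 1).ncard, List.prod_append, pow_succ']
    refine mul_le_mul'
      (List.prod_le_of_length_eq_ncard_Ico hfin (fun γ hγ => hl γ (List.mem_of_mem_take hγ)) ?_)
      (ih (fun γ hγ => hl γ (List.mem_of_mem_drop hγ)) ?_)
    all_goals simp [hlen, Nat.succ_mul]

end OrderedGroup

theorem exists_mem_sub_pow_eq_mul {R : Type*} [CommRing R] {I : Ideal R} {p : ℕ}
    (hp : (p : R) ∈ I) {x y : R} (hxy : x - y ∈ I) :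
    ∃ z ∈ I, x ^ p - y ^ p = (x - y) * z := by
  refine ⟨∑ i ∈ Finset.range p, x ^ i * y ^ (p - 1 - i), ?_,
    ((mul_comm _ _).trans (geom_sum₂_mul x y p)).symm⟩
  rw [← Ideal.Quotient.eq_zero_iff_mem, map_sum]
  simp only [map_mul, map_pow, Ideal.Quotient.eq.2 hxy, geom_sum₂_self]
  rw [← map_natCast (Ideal.Quotient.mk I), Ideal.Quotient.eq_zero_iff_mem.2 hp, zero_mul]

theorem IsLocalRing.sub_mem_maximalIdeal_of_residue_pow_eq {R : Type*} [CommRing R]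
    [IsLocalRing R] {p : ℕ} [ExpChar (ResidueField R) p] (n : ℕ) {x y : R}
    (h : residue R x ^ p ^ n = residue R y ^ p ^ n) : x - y ∈ maximalIdeal R := by
  rw [← residue_eq_zero_iff, map_sub, sub_eq_zero]
  exact iterateFrobenius_inj _ p n (by simpa only [iterateFrobenius_def] using h)

section Valuation

variable {K Γ₀ : Type*} [Field K] [LinearOrderedCommGroupWithZero Γ₀] (v : Valuation K Γ₀)

theorem Valuation.natCast_mem_maximalIdeal {p : ℕ} (hvp : v p < 1) :
    (p : v.valuationSubring) ∈ maximalIdeal v.valuationSubring :=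
  v.mem_maximalIdeal_iff.2 (by simpa using hvp)

theorem Valuation.exists_sub_pow_pow_le_prod {p : ℕ}
    (hp : (p : v.valuationSubring) ∈ maximalIdeal v.valuationSubring) {x y : v.valuationSubring}
    (hxy : x - y ∈ maximalIdeal v.valuationSubring) (n : ℕ) :
    ∃ l : List Γ₀, l.length = n + 1 ∧ (∀ γ ∈ l, γ < 1) ∧
      v ↑(x ^ p ^ n - y ^ p ^ n) ≤ l.prod := by
  induction n with
  | zero => exact ⟨[v ↑(x - y)], rfl, by simpa using v.mem_maximalIdeal_iff.1 hxy, by simp⟩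
  | succ n ih =>
    obtain ⟨l, hlen, hl, hle⟩ := ih
    obtain ⟨z, hz, heq⟩ := exists_mem_sub_pow_eq_mul hp
      (Ideal.mem_of_dvd _ (sub_dvd_pow_sub_pow x y (p ^ n)) hxy)
    refine ⟨v z :: l, by simp [hlen],
      List.forall_mem_cons.2 ⟨v.mem_maximalIdeal_iff.1 hz, hl⟩, ?_⟩
    rw [pow_succ, pow_mul, pow_mul, heq, List.prod_cons, mul_comm (v z)]
    push_cast
    rw [v.map_mul]
    exact mul_le_mul' hle le_rfl

theorem Valuation.sub_pow_pow_mem_span_pow {p e d : ℕ} (hvp : v p < 1)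
    (hfin : (Set.Ico (v p) 1).Finite) (hcard : (Set.Ico (v p) 1).ncard = e) (hd : 1 ≤ d)
    {x y : v.valuationSubring} (hxy : x - y ∈ maximalIdeal v.valuationSubring) :
    x ^ p ^ (d * e - 1) - y ^ p ^ (d * e - 1) ∈ Ideal.span {(p : v.valuationSubring) ^ d} := by
  have he : 1 ≤ e := hcard ▸ (Set.ncard_pos hfin).2 ⟨v p, le_rfl, hvp⟩
  obtain ⟨l, hlen, hl, hle⟩ :=
    v.exists_sub_pow_pow_le_prod (v.natCast_mem_maximalIdeal hvp) hxy (d * e - 1)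
  refine Ideal.mem_span_singleton.2 ((Valuation.valuationSubring.integers v).dvd_of_le ?_)
  calc _ ≤ l.prod := hle
    _ ≤ v p ^ d := List.prod_le_pow_of_length_eq_mul_ncard_Ico hfin d hl
      (by rw [hlen, hcard]; have := Nat.mul_le_mul hd he; omega)
    _ = _ := by simp

end Valuation

theorem teichmueller_padic_power_general
    {K Γ₀ : Type*} [Field K] [LinearOrderedCommGroupWithZero Γ₀]
    (v : Valuation K Γ₀) (p e d : ℕ) (hp : p.Prime)
    (hvp : v (p : K) < 1)
    (hfin : {γ : Γ₀ | v (p : K) ≤ γ ∧ γ < 1}.Finite)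
    (hcard : {γ : Γ₀ | v (p : K) ≤ γ ∧ γ < 1}.ncard = e)
    (hd : 1 ≤ d)
    (α : IsLocalRing.ResidueField ↥(v.valuationSubring))
    (hα : ∃ β, β ^ (p ^ (d * e - 1)) = α) :
    ∃ a : v.valuationSubring,
      (∃ b : v.valuationSubring,
        a - b ^ (p ^ (d * e - 1)) ∈ Ideal.span {(p : v.valuationSubring) ^ d}) ∧
      IsLocalRing.residue ↥(v.valuationSubring) a = α ∧
      ∀ a' : v.valuationSubring,
        (∃ b' : v.valuationSubring,
          a' - b' ^ (p ^ (d * e - 1)) ∈ Ideal.span {(p : v.valuationSubring) ^ d}) →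
        IsLocalRing.residue ↥(v.valuationSubring) a' = α →
        a - a' ∈ Ideal.span {(p : v.valuationSubring) ^ d} := by
  set q := p ^ (d * e - 1)
  have hpm := v.natCast_mem_maximalIdeal hvp
  have : Fact p.Prime := ⟨hp⟩
  have : CharP (ResidueField v.valuationSubring) p :=
    (CharP.charP_iff_prime_eq_zero hp).2 (by simpa using (residue_eq_zero_iff _).2 hpm)
  obtain ⟨β, rfl⟩ := hα
  obtain ⟨b, rfl⟩ := residue_surjective β
  refine ⟨b ^ q, ⟨b, by simp⟩, map_pow _ _ _, ?_⟩
  rintro a' ⟨b', hb'⟩ ha'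
  have hspan : Ideal.span {(p : v.valuationSubring) ^ d} ≤ maximalIdeal _ :=
    (Ideal.span_singleton_le_iff_mem _).2 (Ideal.pow_mem_of_mem _ hpm d hd)
  have hres : residue _ b ^ q = residue _ b' ^ q := by
    rw [← ha', ← map_pow, ← sub_eq_zero, ← map_sub, residue_eq_zero_iff]
    exact hspan hb'
  have hbb' := sub_mem_maximalIdeal_of_residue_pow_eq (d * e - 1) hres
  rw [show b ^ q - a' = (b ^ q - b' ^ q) - (a' - b' ^ q) by ring]
  exact Ideal.sub_mem _ (v.sub_pow_pow_mem_span_pow hvp hfin hcard hd hbb') hb'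

/-- **Teichmüller representatives modulo `p^d`** (Lemma `lem:Teich`).
Let `(K,v)` be a valued field of mixed characteristic `(0,p)` with finite initial
ramification `e` (the interval `(0, v(p)]`, written multiplicatively as
`{γ | v p ≤ γ ∧ γ < 1}`, has exactly `e` elements).  Fix `d ≥ 1` and set
`q = p^(de-1)`.  Then every `q`-th power `α` of the residue field is the residue of a
unique `q`-th power of `𝒪_v / p^d`. -/
theorem teichmueller_padic_power
    {K Γ₀ : Type*} [Field K] [LinearOrderedCommGroupWithZero Γ₀] [CharZero K]
    (v : Valuation K Γ₀) (p e d : ℕ) (hp : p.Prime)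
    (hvp : v (p : K) < 1)
    (hfin : {γ : Γ₀ | v (p : K) ≤ γ ∧ γ < 1}.Finite)
    (hcard : {γ : Γ₀ | v (p : K) ≤ γ ∧ γ < 1}.ncard = e)
    (hd : 1 ≤ d)
    (α : IsLocalRing.ResidueField ↥(v.valuationSubring))
    (hα : ∃ β, β ^ (p ^ (d * e - 1)) = α) :
    ∃ a : v.valuationSubring,
      (∃ b : v.valuationSubring,
        a - b ^ (p ^ (d * e - 1)) ∈ Ideal.span {(p : v.valuationSubring) ^ d}) ∧
      IsLocalRing.residue ↥(v.valuationSubring) a = α ∧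
      ∀ a' : v.valuationSubring,
        (∃ b' : v.valuationSubring,
          a' - b' ^ (p ^ (d * e - 1)) ∈ Ideal.span {(p : v.valuationSubring) ^ d}) →
        IsLocalRing.residue ↥(v.valuationSubring) a' = α →
        a - a' ∈ Ideal.span {(p : v.valuationSubring) ^ d} :=
  teichmueller_padic_power_general v p e d hp hvp hfin hcard hd α hα
end

section
/- Let k be a field of characteristic p, let g ≥ 0, and let β_1, …, β_m ∈ k be p-independent elements. Given finitely many elements x_1, …, x_n ∈ k, one can extend the list to p-independent elements β_1, …, β_{m'}, with m' ≤ M_0(p,m,n,g), such that each x_i lies in the subring k^{(p^g)}[β_1, …, β_{m'}], where k^{(p^g)} is the subfield of (p^g)-th powers. Here M_0 is defined recursively by M_0(p,m,n,0) = m and M_0(p,m,n,g+1) = M_0(p, m+n, n·p^{n+m}, g). -/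
/-!
Induction on `g`. Going through the `x_i`, adjoin `x_i` to the family whenever it is not
already in `k^{(p)}[β]`; such an `x` keeps the family `p`-independent, because `X^p - x^p` is
irreducible over the field `K = k^{(p)}[β]`, so `1, x, …, x^{p-1}` are independent over `K`,
while the `β`-monomials lie in `K` and are independent over `k^{(p)}`. This costs at most `n`
new elements, after which every `x_i` is a `k^{(p)}`-combination `∑ c_e^p β^e` over the
`p^{m+n}` reduced exponent vectors `e`. Extend again, for `g` steps, so that the `n·p^{m+n}`
coefficients `c_e` lie in `k^{(p^g)}[β]`; then Frobenius puts `c_e^p` in `k^{(p^{g+1})}[β]`.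
-/

/-- The subring of `q`-th powers of `k` (for `q = p^g` and `k` of characteristic `p`
this is the subfield `k^{(q)}`). -/
def pPowers (k : Type*) [CommRing k] (q : ℕ) : Subring k :=
  Subring.closure (Set.range fun x : k => x ^ q)

/-- A family `β` of elements of `k` is `p`-independent if the monomials in the `β i`
with all exponents `< p` are linearly independent over the subring `k^{(p)}` of
`p`-th powers. -/
def IsPIndep {k : Type*} [Field k] (p : ℕ) {ι : Type*} (β : ι → k) : Prop :=
  LinearIndependent (pPowers k p)
    (fun I : {f : ι →₀ ℕ // ∀ i, f i < p} => (I : ι →₀ ℕ).prod fun i n => β i ^ n)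

/-- `M₀(p,m,n,0) = m`, `M₀(p,m,n,g+1) = M₀(p, m+n, n·p^{n+m}, g)`. -/
def M0 (p : ℕ) : ℕ → ℕ → ℕ → ℕ
  | m, _, 0 => m
  | m, n, g + 1 => M0 p (m + n) (n * p ^ (n + m)) g

theorem M0_mono {p : ℕ} (hp : 0 < p) (g : ℕ) {m₁ n₁ m₂ n₂ : ℕ} (hm : m₁ ≤ m₂) (hn : n₁ ≤ n₂) :
    M0 p m₁ n₁ g ≤ M0 p m₂ n₂ g := by
  induction g generalizing m₁ n₁ m₂ n₂ with
  | zero => exact hm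
  | succ g ih =>
    exact ih (by omega) (Nat.mul_le_mul hn (Nat.pow_le_pow_right hp (by omega)))

theorem LinearIndependent.mul_of_le {A : Type*} [CommRing A] {ι κ : Type*} {F K : Subring A}
    (hFK : F ≤ K) {v : ι → A} (hv : LinearIndependent F v) (hvK : ∀ i, v i ∈ K) {w : κ → A}
    (hw : LinearIndependent K w) :
    LinearIndependent F fun q : ι × κ => v q.1 * w q.2 := by
  let _ : Algebra F K := (Subring.inclusion hFK).toAlgebra
  have _ : IsScalarTower F K A := IsScalarTower.of_algebraMap_eq fun _ => rfl
  have hv' : LinearIndependent F fun i => (⟨v i, hvK i⟩ : K) :=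
    .of_comp (IsScalarTower.toAlgHom F K A).toLinearMap hv
  exact (linearIndependent_smul hv' hw :)

noncomputable def boundedExponentsEquiv (p : ℕ) (ι : Type*) [Finite ι] :
    {f : ι →₀ ℕ // ∀ i, f i < p} ≃ (ι → Fin p) where
  toFun f i := ⟨f.1 i, f.2 i⟩
  invFun e := ⟨Finsupp.equivFunOnFinite.symm fun i => e i, fun i => by simp⟩
  left_inv f := by ext; simp
  right_inv e := by ext; simp

theorem isPIndep_iff {k : Type*} [Field k] (p : ℕ) {ι : Type*} [Fintype ι] (β : ι → k) :
    IsPIndep p β ↔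
      LinearIndependent (pPowers k p) fun e : ι → Fin p => ∏ i, β i ^ (e i : ℕ) := by
  refine (linearIndependent_equiv' (boundedExponentsEquiv p ι).symm ?_).symm
  funext e
  simp [boundedExponentsEquiv, Finsupp.prod_fintype]

section PowAdjoin

variable {k : Type*} [CommRing k]

/-- `k^{(q)}[S]`. -/
def powAdjoin (q : ℕ) (S : Set k) : Subring k :=
  Subring.closure ((Set.range fun y : k => y ^ q) ∪ S)

theorem powAdjoin_mono {q : ℕ} {S T : Set k} (h : S ⊆ T) : powAdjoin q S ≤ powAdjoin q T :=
  Subring.closure_mono (Set.union_subset_union_right _ h)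

theorem pow_mem_powAdjoin (q : ℕ) (S : Set k) (y : k) : y ^ q ∈ powAdjoin q S :=
  Subring.subset_closure (Or.inl ⟨y, rfl⟩)

theorem mem_powAdjoin_of_mem {q : ℕ} {S : Set k} {y : k} (hy : y ∈ S) : y ∈ powAdjoin q S :=
  Subring.subset_closure (Or.inr hy)

theorem pow_mem_pPowers (q : ℕ) (y : k) : y ^ q ∈ pPowers k q :=
  Subring.subset_closure (Set.mem_range_self y)

variable {p : ℕ}

theorem monomial_mem_span (hp : 0 < p) {m : ℕ} (β : Fin m → k) (f : Fin m → ℕ) :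
    ∏ i, β i ^ f i ∈ Submodule.span (pPowers k p)
      (Set.range fun e : Fin m → Fin p => ∏ i, β i ^ (e i : ℕ)) := by
  have hsplit : ∏ i, β i ^ f i = (∏ i, β i ^ (f i / p)) ^ p * ∏ i, β i ^ (f i % p) := by
    rw [← Finset.prod_pow, ← Finset.prod_mul_distrib]
    refine Finset.prod_congr rfl fun i _ => ?_
    rw [← pow_mul, ← pow_add, mul_comm, Nat.div_add_mod]
  rw [hsplit]
  exact Submodule.smul_mem _ (⟨_, pow_mem_pPowers p _⟩ : pPowers k p)
    (Submodule.subset_span ⟨fun i => ⟨f i % p, Nat.mod_lt _ hp⟩, rfl⟩)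

theorem powAdjoin_subset_span (hp : 0 < p) {m : ℕ} (β : Fin m → k) :
    (powAdjoin p (Set.range β) : Set k) ⊆ Submodule.span (pPowers k p)
      (Set.range fun e : Fin m → Fin p => ∏ i, β i ^ (e i : ℕ)) := by
  set W := Submodule.span (pPowers k p)
    (Set.range fun e : Fin m → Fin p => ∏ i, β i ^ (e i : ℕ))
  have hone : (1 : k) ∈ W := by simpa using monomial_mem_span hp β 0
  have hmul : ∀ a b, a ∈ W → b ∈ W → a * b ∈ W := by
    have hWW : W * W ≤ W := by
      rw [Submodule.span_mul_span, Submodule.span_le]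
      rintro _ ⟨_, ⟨e, rfl⟩, _, ⟨e', rfl⟩, rfl⟩
      simpa [← Finset.prod_mul_distrib, ← pow_add] using
        monomial_mem_span hp β fun i => e i + e' i
    exact fun a b ha hb => hWW (Submodule.mul_mem_mul ha hb)
  refine Subring.closure_le (t := (W.toSubalgebra hone hmul).toSubring) |>.2 ?_
  rintro _ (⟨y, rfl⟩ | ⟨j, rfl⟩)
  · simpa [Subring.smul_def] using Submodule.smul_mem W ⟨y ^ p, pow_mem_pPowers p y⟩ hone
  · simpa [pow_ite, Finset.prod_ite_eq'] using
      monomial_mem_span hp β fun i => if i = j then 1 else 0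

variable (p) [ExpChar k p]

theorem pPowers_eq_frobenius_range : pPowers k p = (frobenius k p).range := by
  rw [pPowers, ← Subring.closure_eq (frobenius k p).range]
  rfl

theorem exists_eq_sum_pow_mul_monomial {m : ℕ} {β : Fin m → k} {z : k}
    (hz : z ∈ powAdjoin p (Set.range β)) :
    ∃ c : (Fin m → Fin p) → k, z = ∑ e, c e ^ p * ∏ i, β i ^ (e i : ℕ) := by
  obtain ⟨c, hc⟩ := Submodule.mem_span_range_iff_exists_fun _ |>.1
    (powAdjoin_subset_span (expChar_pos k p) β hz)
  have hroot : ∀ e, ∃ y : k, y ^ p = c e := fun e => by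
    simpa [pPowers_eq_frobenius_range, frobenius_def] using (c e).2
  choose y hy using hroot
  exact ⟨y, by simp_rw [hy]; exact hc.symm⟩

theorem pow_mem_powAdjoin_mul {q : ℕ} {S : Set k} {z : k} (hz : z ∈ powAdjoin q S) :
    z ^ p ∈ powAdjoin (q * p) S := by
  have hfrob : (powAdjoin q S).map (frobenius k p) ≤ powAdjoin (q * p) S := by
    rw [powAdjoin, RingHom.map_closure, Subring.closure_le]
    rintro _ ⟨z, (⟨y, rfl⟩ | hz), rfl⟩
    · simpa [frobenius_def, ← pow_mul] using pow_mem_powAdjoin (q * p) S y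
    · exact pow_mem (mem_powAdjoin_of_mem hz) p
  exact hfrob ⟨z, hz, rfl⟩

end PowAdjoin

section Field

variable {k : Type*} [Field k]

theorem inv_mem_powAdjoin {q : ℕ} (hq : q ≠ 0) {S : Set k} {z : k} (hz : z ∈ powAdjoin q S) :
    z⁻¹ ∈ powAdjoin q S := by
  have hinv : z⁻¹ = z ^ (q - 1) * z⁻¹ ^ q := by
    rcases eq_or_ne z 0 with rfl | hz0
    · simp [hq]
    · rw [inv_pow, ← div_eq_mul_inv, eq_div_iff (pow_ne_zero _ hz0), ← mul_pow_sub_one hq,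
        inv_mul_cancel_left₀ hz0]
  rw [hinv]
  exact mul_mem (pow_mem hz _) (pow_mem_powAdjoin q S _)

def powAdjoinSubfield {q : ℕ} (hq : q ≠ 0) (S : Set k) : Subfield k :=
  { powAdjoin q S with inv_mem' := fun _ => inv_mem_powAdjoin hq }

variable (p : ℕ) [Fact p.Prime] [CharP k p]

open Polynomial in
theorem Subfield.linearIndependent_pow_of_notMem {K : Subfield k} {x : k} (hx : x ∉ K)
    (hxp : x ^ p ∈ K) : LinearIndependent K fun i : Fin p => x ^ (i : ℕ) := by
  have hp : p.Prime := Fact.out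
  have hroot : ∀ b : K, b ^ p ≠ ⟨x ^ p, hxp⟩ := fun b hb =>
    hx (frobenius_inj k p (congrArg Subtype.val hb) ▸ b.2)
  have hminpoly : minpoly K x = X ^ p - C ⟨x ^ p, hxp⟩ :=
    (minpoly.eq_of_irreducible_of_monic (X_pow_sub_C_irreducible_of_prime hp hroot)
      (by simp [sub_eq_zero]; rfl) (monic_X_pow_sub_C _ hp.ne_zero)).symm
  have := linearIndependent_pow (K := K) x
  rwa [hminpoly, natDegree_X_pow_sub_C] at this

theorem IsPIndep.snoc {m : ℕ} {β : Fin m → k} (hβ : IsPIndep p β) {x : k}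
    (hx : x ∉ powAdjoin p (Set.range β)) : IsPIndep p (Fin.snoc β x : Fin (m + 1) → k) := by
  rw [isPIndep_iff] at hβ ⊢
  have hpow : LinearIndependent (powAdjoin p (Set.range β)) fun i : Fin p => x ^ (i : ℕ) :=
    Subfield.linearIndependent_pow_of_notMem (K := powAdjoinSubfield (expChar_ne_zero k p) _) p
      hx (pow_mem_powAdjoin p _ x)
  have hle : pPowers k p ≤ powAdjoin p (Set.range β) :=
    Subring.closure_mono Set.subset_union_left
  have hli := hβ.mul_of_le hle
    (fun e => prod_mem fun i _ => pow_mem (mem_powAdjoin_of_mem (Set.mem_range_self i)) _) hpow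
  refine (linearIndependent_equiv' ((Equiv.prodComm _ _).trans (Fin.snocEquiv _)) ?_).1 hli
  funext q
  simp [Fin.prod_univ_castSucc]

theorem exists_pIndep_extension_of_finset {m : ℕ} (β : Fin m → k) (hβ : IsPIndep p β)
    (T : Finset k) :
    ∃ (m' : ℕ) (hm : m ≤ m') (β' : Fin m' → k),
      m' ≤ m + T.card ∧ (∀ i : Fin m, β' (Fin.castLE hm i) = β i) ∧ IsPIndep p β' ∧
      ∀ x ∈ T, x ∈ powAdjoin p (Set.range β') := by
  classical
  induction T using Finset.induction_on with
  | empty => exact ⟨m, le_rfl, β, by simp, fun _ => rfl, hβ, by simp⟩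
  | insert x T hxT ih =>
    obtain ⟨m', hm, β', hcard, hext, hβ', hT⟩ := ih
    rw [Finset.card_insert_of_notMem hxT]
    simp only [Finset.forall_mem_insert]
    by_cases hx : x ∈ powAdjoin p (Set.range β')
    · exact ⟨m', hm, β', by omega, hext, hβ', hx, hT⟩
    · have hsub : powAdjoin p (Set.range β') ≤ powAdjoin p (Set.range (Fin.snoc β' x)) :=
        powAdjoin_mono (by simp [Set.subset_insert])
      refine ⟨m' + 1, hm.trans m'.le_succ, Fin.snoc β' x, by omega, fun i => ?_, hβ'.snoc p hx,
        mem_powAdjoin_of_mem (by simp), fun y hy => hsub (hT y hy)⟩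
      exact (Fin.snoc_castSucc (α := fun _ => k) ..).trans (hext i)

theorem exists_pIndep_extension {ι : Type*} [Fintype ι] (g : ℕ) {m : ℕ} (β : Fin m → k)
    (hβ : IsPIndep p β) (x : ι → k) :
    ∃ (m' : ℕ) (hm : m ≤ m') (β' : Fin m' → k),
      m' ≤ M0 p m (Fintype.card ι) g ∧ (∀ i : Fin m, β' (Fin.castLE hm i) = β i) ∧
      IsPIndep p β' ∧ ∀ i, x i ∈ powAdjoin (p ^ g) (Set.range β') := by
  classical
  have hp : 0 < p := (Fact.out : p.Prime).pos
  induction g generalizing m ι with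
  | zero =>
    exact ⟨m, le_rfl, β, le_rfl, fun _ => rfl, hβ,
      fun i => by simpa using pow_mem_powAdjoin 1 _ (x i)⟩
  | succ g ih =>
    obtain ⟨m₂, hm₂, β₂, hcard₂, hext₂, hβ₂, hx₂⟩ :=
      exists_pIndep_extension_of_finset p β hβ (Finset.univ.image x)
    choose c hc using fun i => exists_eq_sum_pow_mul_monomial p (hx₂ (x i) (by simp))
    obtain ⟨m₃, hm₃, β₃, hcard₃, hext₃, hβ₃, hc₃⟩ :=
      ih β₂ hβ₂ fun ie : ι × (Fin m₂ → Fin p) => c ie.1 ie.2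
    refine ⟨m₃, hm₂.trans hm₃, β₃, ?_, fun i => (hext₃ _).trans (hext₂ i), hβ₃, fun i => ?_⟩
    · have hcard : m₂ ≤ m + Fintype.card ι :=
        hcard₂.trans (Nat.add_le_add_left (Finset.card_image_le.trans_eq Finset.card_univ) m)
      calc m₃ ≤ M0 p m₂ (Fintype.card ι * p ^ m₂) g := by simpa using hcard₃
        _ ≤ M0 p (m + Fintype.card ι) (Fintype.card ι * p ^ (Fintype.card ι + m)) g :=
          M0_mono hp g hcard (Nat.mul_le_mul_left _ (Nat.pow_le_pow_right hp (by omega)))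
    · rw [hc i, pow_succ]
      exact sum_mem fun e _ => mul_mem (pow_mem_powAdjoin_mul p (hc₃ (i, e)))
        (prod_mem fun j _ => pow_mem (mem_powAdjoin_of_mem (Set.mem_range.2 ⟨_, hext₃ j⟩)) _)

end Field

/-- **Bounded extension of a `p`-independent family** (Lemma
`lem:pick-p-indep-to-expand`).  Let `k` be a field of characteristic `p`, `g ≥ 0`, and
`β₁, …, β_m ∈ k` `p`-independent.  Given `x₁, …, x_n ∈ k`, the list can be extended to a
`p`-independent list `β₁, …, β_{m'}` with `m' ≤ M₀(p,m,n,g)` such that each `x_i` lies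
in the subring `k^{(p^g)}[β₁, …, β_{m'}]`. -/
theorem extend_p_independent_bounded
    {k : Type*} [Field k] (p : ℕ) [Fact p.Prime] [CharP k p] (g m n : ℕ)
    (β : Fin m → k) (hβ : IsPIndep p β) (x : Fin n → k) :
    ∃ (m' : ℕ) (hm : m ≤ m') (β' : Fin m' → k),
      m' ≤ M0 p m n g ∧
      (∀ i : Fin m, β' (Fin.castLE hm i) = β i) ∧
      IsPIndep p β' ∧
      ∀ i, x i ∈ Subring.closure
        ((Set.range fun y : k => y ^ (p ^ g)) ∪ Set.range β') := by
  obtain ⟨m', hm, β', hcard, hext, hβ', hx⟩ := exists_pIndep_extension p g β hβ x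
  exact ⟨m', hm, β', by simpa using hcard, hext, hβ', hx⟩
end

section
/- Let p = 2, and let K be a complete unramified discretely valued field of mixed characteristic (0,2) with residue field 𝔽₂(s,t), where s, t are algebraically independent over 𝔽₂. Let b_s, b_t ∈ O_v be lifts of s, t. Then the field L = K(√b_s, √b_t) does not contain a square root of b_s + b_t, even though in the residue field of L (which is 𝔽₂(√s, √t)) the element s + t does have a square root, namely √s + √t. -/
/-!
If `u ∉ K²` and `char K ≠ 2`, an element `w ∈ K` that is a square in `K(√u)` lies in `K² ∪ u K²`:
the `√u`-coefficient `2ef` of `(e + f√u)²` must vanish. Applied twice, `w` is a square in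
`K(√u, √v)` only if one of `w, uw, vw, uvw` is a square in `K`. For `K = Frac O` with `O`
integrally closed, a square root in `K` of an element of `O` lies in `O`, so its residue is a square
in `𝔽₂(s, t)`. There `P(s, t)` is never a square when some `∂P/∂Xᵢ ≠ 0`, since `p² = P q²` forces
`q² ∂P/∂Xᵢ = 0` in characteristic `2`; this rules out `s, t, st` and `(s + t)·{1, s, t, st}`.
-/

open IntermediateField

section QuadraticExtension

variable {K L : Type*} [Field K] [Field L] [Algebra K L] {u : K} {x : L}

open Polynomial in
theorem exists_eq_add_mul_of_mem_adjoin_of_sq_eq (hx : x ^ 2 = algebraMap K L u) {z : L}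
    (hz : z ∈ K⟮x⟯) : ∃ e f : K, z = algebraMap K L e + algebraMap K L f * x := by
  have hint : IsIntegral K x := ⟨X ^ 2 - C u, monic_X_pow_sub_C u two_ne_zero, by simp [hx]⟩
  rw [← mem_toSubalgebra, adjoin_simple_toSubalgebra_of_isAlgebraic hint.isAlgebraic] at hz
  induction hz using Algebra.adjoin_induction with
  | mem w hw => exact ⟨0, 1, by simp [Set.mem_singleton_iff.mp hw]⟩
  | algebraMap r => exact ⟨r, 0, by simp⟩
  | add _ _ _ _ ih₁ ih₂ =>
    obtain ⟨e, f, rfl⟩ := ih₁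
    obtain ⟨e', f', rfl⟩ := ih₂
    exact ⟨e + e', f + f', by simp only [map_add]; ring⟩
  | mul _ _ _ _ ih₁ ih₂ =>
    obtain ⟨e, f, rfl⟩ := ih₁
    obtain ⟨e', f', rfl⟩ := ih₂
    refine ⟨e * e' + f * f' * u, e * f' + f * e', ?_⟩
    simp only [map_add, map_mul]
    linear_combination algebraMap K L f * algebraMap K L f' * hx

theorem isSquare_or_isSquare_mul_of_mem_adjoin_of_sq_eq (h2 : (2 : K) ≠ 0)
    (hx : x ^ 2 = algebraMap K L u) (hu : ¬IsSquare u) {z : L} (hz : z ∈ K⟮x⟯) {w : K}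
    (hzw : z ^ 2 = algebraMap K L w) : IsSquare w ∨ IsSquare (u * w) := by
  obtain ⟨e, f, rfl⟩ := exists_eq_add_mul_of_mem_adjoin_of_sq_eq hx hz
  rcases eq_or_ne (e * f) 0 with hef | hef
  · rcases mul_eq_zero.mp hef with rfl | rfl
    · right
      refine ⟨u * f, (algebraMap K L).injective ?_⟩
      simp only [map_zero, zero_add, map_mul] at hzw ⊢
      linear_combination algebraMap K L u * algebraMap K L f ^ 2 * hx - algebraMap K L u * hzw
    · left
      exact ⟨e, (algebraMap K L).injective (by simpa [sq] using hzw.symm)⟩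
  · have hc : algebraMap K L (2 * e * f) ≠ 0 := by
      rw [mul_assoc, _root_.map_ne_zero]; exact mul_ne_zero h2 hef
    have hexp : algebraMap K L (2 * e * f) * x = algebraMap K L (w - e ^ 2 - f ^ 2 * u) := by
      simp only [map_sub, map_mul, map_pow, map_ofNat]
      linear_combination hzw - algebraMap K L f ^ 2 * hx
    refine absurd ⟨(w - e ^ 2 - f ^ 2 * u) / (2 * e * f), (algebraMap K L).injective ?_⟩ hu
    rw [← hx, map_mul, map_div₀, ← hexp]
    field_simp

end QuadraticExtension

section BiquadraticExtension

variable {K L : Type*} [Field K] [Field L] [Algebra K L] {u v : K} {x y : L}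

theorem isSquare_of_isSquare_algebraMap_adjoin (h2 : (2 : K) ≠ 0)
    (hx : x ^ 2 = algebraMap K L u) (hu : ¬IsSquare u) {w : K}
    (hw : IsSquare (algebraMap K K⟮x⟯ w)) : IsSquare w ∨ IsSquare (u * w) := by
  obtain ⟨r, hr⟩ := hw
  refine isSquare_or_isSquare_mul_of_mem_adjoin_of_sq_eq h2 hx hu r.2 ?_
  rw [← coe_algebraMap_apply, hr, sq, MulMemClass.coe_mul]

theorem isSquare_or_of_mem_adjoin_pair_of_sq_eq (h2 : (2 : K) ≠ 0)
    (hx : x ^ 2 = algebraMap K L u) (hy : y ^ 2 = algebraMap K L v) (hu : ¬IsSquare u)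
    (hv : ¬IsSquare v) (huv : ¬IsSquare (u * v)) {z : L} (hz : z ∈ K⟮x, y⟯) {w : K}
    (hzw : z ^ 2 = algebraMap K L w) :
    IsSquare w ∨ IsSquare (u * w) ∨ IsSquare (v * w) ∨ IsSquare (u * (v * w)) := by
  set M := K⟮x⟯
  have h2M : (2 : M) ≠ 0 := fun h ↦
    h2 ((algebraMap K M).injective (by rw [map_ofNat, h, map_zero]))
  have hvM : ¬IsSquare (algebraMap K M v) := fun h ↦
    (isSquare_of_isSquare_algebraMap_adjoin h2 hx hu h).elim hv huv
  have hzM : z ∈ M⟮y⟯ := by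
    rw [← mem_restrictScalars K, adjoin_adjoin_left, Set.singleton_union]
    exact hz
  have hyM : y ^ 2 = algebraMap M L (algebraMap K M v) := by
    rw [← IsScalarTower.algebraMap_apply, hy]
  have hzwM : z ^ 2 = algebraMap M L (algebraMap K M w) := by
    rw [← IsScalarTower.algebraMap_apply, hzw]
  rcases isSquare_or_isSquare_mul_of_mem_adjoin_of_sq_eq h2M hyM hvM hzM hzwM with h | h
  · exact (isSquare_of_isSquare_algebraMap_adjoin h2 hx hu h).imp id Or.inl
  · rw [← map_mul] at h
    exact Or.inr (Or.inr (isSquare_of_isSquare_algebraMap_adjoin h2 hx hu h))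

end BiquadraticExtension

open Polynomial in
theorem IsLocalRing.isSquare_residue_of_isSquare_algebraMap {O K : Type*} [CommRing O]
    [IsDomain O] [IsLocalRing O] [IsIntegrallyClosed O] [Field K] [Algebra O K]
    [IsFractionRing O K] {m : O} (h : IsSquare (algebraMap O K m)) :
    IsSquare (IsLocalRing.residue O m) := by
  obtain ⟨c, hc⟩ := h
  have hint : IsIntegral O c :=
    ⟨X ^ 2 - C m, monic_X_pow_sub_C m two_ne_zero, by simp [sq, ← hc]⟩
  obtain ⟨a, rfl⟩ := IsIntegrallyClosed.isIntegral_iff.mp hint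
  rw [← map_mul] at hc
  exact ⟨IsLocalRing.residue O a, by rw [← map_mul, IsFractionRing.injective O K hc]⟩

namespace MvPolynomial

variable {σ R : Type*} [CommRing R] [IsDomain R] [CharP R 2]

theorem pderiv_eq_zero_of_sq_eq_mul_sq {p q P : MvPolynomial σ R} (hq : q ≠ 0)
    (h : p ^ 2 = P * q ^ 2) (i : σ) : pderiv i P = 0 := by
  have h2 : (2 : MvPolynomial σ R) = 0 := CharTwo.two_eq_zero
  have hder := congrArg (pderiv i) h
  simp only [sq, Derivation.leibniz, smul_eq_mul] at hder
  have : pderiv i P * (q * q) = 0 := by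
    linear_combination -hder + (p * pderiv i p - P * q * pderiv i q) * h2
  exact (mul_eq_zero.mp this).resolve_right (mul_ne_zero hq hq)

theorem not_isSquare_aeval_of_pderiv_ne_zero {k : Type*} [Field k] [Algebra R k] {v : σ → k}
    (hv : AlgebraicIndependent R v) (hgen : Subfield.closure (Set.range v) = ⊤)
    {P : MvPolynomial σ R} {i : σ} (hP : pderiv i P ≠ 0) : ¬IsSquare (aeval v P) := by
  rintro ⟨r, hr⟩
  have hsub : Subring.closure (Set.range v) ≤ (aeval (R := R) v).range.toSubring := by
    rw [← Algebra.adjoin_range_eq_range_aeval]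
    exact Subring.closure_le.mpr Algebra.subset_adjoin
  obtain ⟨a, ha, b, hb, rfl⟩ := Subfield.mem_closure_iff.mp (hgen ▸ Subfield.mem_top r)
  obtain ⟨p, rfl⟩ := hsub ha
  obtain ⟨q, rfl⟩ := hsub hb
  simp only [AlgHom.toRingHom_eq_coe, RingHom.coe_coe] at hr
  have hq : q ≠ 0 := by
    rintro rfl
    exact hP (by rw [hv (a₁ := P) (a₂ := 0) (by simp [hr]), map_zero])
  have hqv : aeval v q ≠ 0 := fun h ↦ hq (hv (by rw [h, map_zero]))
  refine hP (pderiv_eq_zero_of_sq_eq_mul_sq (p := p) hq (hv ?_) i)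
  rw [map_pow, map_mul, map_pow, hr]
  field_simp

end MvPolynomial

theorem no_sqrt_of_sum_in_biquadratic_extension_general
    {O : Type*} [CommRing O] [IsDomain O] [IsDiscreteValuationRing O] [CharZero O]
    [Algebra (ZMod 2) (IsLocalRing.ResidueField O)]
    (s t : IsLocalRing.ResidueField O)
    (hst : AlgebraicIndependent (ZMod 2) ![s, t])
    (hgen : Subfield.closure {s, t} = (⊤ : Subfield (IsLocalRing.ResidueField O)))
    (bs bt : O) (hbs : IsLocalRing.residue O bs = s) (hbt : IsLocalRing.residue O bt = t)
    {L : Type*} [Field L] [Algebra (FractionRing O) L]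
    (x y : L)
    (hx : x ^ 2 = algebraMap (FractionRing O) L (algebraMap O (FractionRing O) bs))
    (hy : y ^ 2 = algebraMap (FractionRing O) L (algebraMap O (FractionRing O) bt))
    (hL : IntermediateField.adjoin (FractionRing O) {x, y} = ⊤) :
    (¬ ∃ z : L, z ^ 2 =
        algebraMap (FractionRing O) L (algebraMap O (FractionRing O) (bs + bt))) ∧
    ∀ (k' : Type*) [Field k'] [CharP k' 2]
      (f : IsLocalRing.ResidueField O →+* k') (σ τ : k'),
      σ ^ 2 = f s → τ ^ 2 = f t → (σ + τ) ^ 2 = f (s + t) := by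
  refine ⟨?_, fun k' _ _ f σ τ hσ hτ ↦ by rw [map_add, ← hσ, ← hτ, CharTwo.add_sq]⟩
  rintro ⟨z, hz⟩
  -- `hP` certifies `∂P/∂Xᵢ ≠ 0` by a nonzero value at `(0, 1)`
  open MvPolynomial in
  have nonsq (m : O) (P : MvPolynomial (Fin 2) (ZMod 2)) (i : Fin 2)
      (hP : eval ![0, 1] (pderiv i P) ≠ 0) (hm : IsLocalRing.residue O m = aeval ![s, t] P) :
      ¬IsSquare (algebraMap O (FractionRing O) m) := fun h ↦
    not_isSquare_aeval_of_pderiv_ne_zero hst (by rwa [Matrix.range_cons_cons_empty])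
      (fun h0 ↦ hP (by rw [h0, map_zero]))
      (hm ▸ IsLocalRing.isSquare_residue_of_isSquare_algebraMap h)
  rcases isSquare_or_of_mem_adjoin_pair_of_sq_eq two_ne_zero hx hy
    (nonsq bs (X 0) 0 (by simp) (by simp [hbs])) (nonsq bt (X 1) 1 (by simp) (by simp [hbt]))
    (by simpa using nonsq (bs * bt) (X 0 * X 1) 0 (by simp [pderiv_X]) (by simp [hbs, hbt]))
    (hL ▸ IntermediateField.mem_top) hz with h | h | h | h
  · exact nonsq _ (X 0 + X 1) 0 (by simp [pderiv_X]) (by simp [hbs, hbt]) h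
  · exact nonsq (bs * (bs + bt)) (X 0 * (X 0 + X 1)) 0 (by simp [pderiv_X])
      (by simp [hbs, hbt]) (by simpa using h)
  · exact nonsq (bt * (bs + bt)) (X 1 * (X 0 + X 1)) 0 (by simp [pderiv_X])
      (by simp [hbs, hbt]) (by simpa using h)
  · exact nonsq (bs * (bt * (bs + bt))) (X 0 * (X 1 * (X 0 + X 1))) 0 (by simp [pderiv_X])
      (by simp [hbs, hbt]) (by simpa using h)

/-- **Failure of quantifier elimination, key computation** (Example `ex:qe-fails`).
Let `K` be a complete unramified discretely valued field of mixed characteristic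
`(0,2)` (here presented via its valuation ring `O`, a complete DVR with uniformizer `2`)
whose residue field is `𝔽₂(s,t)` with `s,t` algebraically independent.  Let
`b_s, b_t ∈ O` be lifts of `s, t`.  Then the field `L = K(√b_s, √b_t)` contains no
square root of `b_s + b_t` — even though in the residue field of `L` the element
`s + t` does have the square root `√s + √t` (in characteristic `2`,
`(√s + √t)² = s + t`). -/
theorem no_sqrt_of_sum_in_biquadratic_extension
    {O : Type*} [CommRing O] [IsDomain O] [IsDiscreteValuationRing O] [CharZero O]
    [IsAdicComplete (IsLocalRing.maximalIdeal O) O]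
    (h2 : Irreducible (2 : O))
    [CharP (IsLocalRing.ResidueField O) 2]
    [Algebra (ZMod 2) (IsLocalRing.ResidueField O)]
    (s t : IsLocalRing.ResidueField O)
    (hst : AlgebraicIndependent (ZMod 2) ![s, t])
    (hgen : Subfield.closure {s, t} = (⊤ : Subfield (IsLocalRing.ResidueField O)))
    (bs bt : O) (hbs : IsLocalRing.residue O bs = s) (hbt : IsLocalRing.residue O bt = t)
    {L : Type*} [Field L] [Algebra (FractionRing O) L]
    (x y : L)
    (hx : x ^ 2 = algebraMap (FractionRing O) L (algebraMap O (FractionRing O) bs))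
    (hy : y ^ 2 = algebraMap (FractionRing O) L (algebraMap O (FractionRing O) bt))
    (hL : IntermediateField.adjoin (FractionRing O) {x, y} = ⊤) :
    (¬ ∃ z : L, z ^ 2 =
        algebraMap (FractionRing O) L (algebraMap O (FractionRing O) (bs + bt))) ∧
    ∀ (k' : Type*) [Field k'] [CharP k' 2]
      (f : IsLocalRing.ResidueField O →+* k') (σ τ : k'),
      σ ^ 2 = f s → τ ^ 2 = f t → (σ + τ) ^ 2 = f (s + t) :=
  no_sqrt_of_sum_in_biquadratic_extension_general s t hst hgen bs bt hbs hbt x y hx hy hL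
end

section
/- Let n > e be a natural number coprime to p. In any finitely ramified henselian valued field (K,v) of mixed characteristic (0,p) with initial ramification e, the valuation ring O_v is exactly the set {x ∈ K : ∃y, y^n = 1 + p x^n}, and the maximal ideal m_v is exactly the set {x ∈ K : ∃y, y^n = 1 + p^{-1} x^n}. -/
/-!
Write `π = v p`. Since `[π, 1)` has `e < n` elements, the powers `γ, …, γⁿ` of any `γ < 1`
cannot all lie in it, so `γⁿ < π`. Hence neither `π` nor `π⁻¹` is an `n`-th power in the value
group, and for `a = p^{±1}` the equation `yⁿ = 1 + a xⁿ` is solvable exactly when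
`v (a xⁿ) < 1`: if `v (a xⁿ) ≥ 1`, comparing valuations would make `v a` an `n`-th power, and
if `v (a xⁿ) < 1`, Hensel's lemma applies to `Xⁿ - (1 + a xⁿ)` at `1`, whose derivative `n` is a
unit because `n` is prime to `p`. Finally, `γⁿ < π` for `γ < 1` turns `π γⁿ < 1` into `γ ≤ 1`
and `π⁻¹ γⁿ < 1` into `γ < 1`.
-/

open Polynomial IsLocalRing

section PowersBelowOne

variable {Γ₀ : Type*} [LinearOrderedCommGroupWithZero Γ₀] {π : Γ₀} {n : ℕ}

theorem pow_lt_of_ncard_Ico_lt (hπ : π ≠ 0) (hfin : (Set.Ico π 1).Finite)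
    (hcard : (Set.Ico π 1).ncard < n) {γ : Γ₀} (hγ : γ < 1) : γ ^ n < π := by
  by_contra! h
  have hn : n ≠ 0 := by omega
  have hγ0 : 0 < γ := zero_lt_iff.2 fun hγ0 => hπ (le_zero_iff.1 (by simpa [hγ0, hn] using h))
  have hmaps : ∀ k ∈ Set.Icc 1 n, γ ^ k ∈ Set.Ico π 1 := fun k hk =>
    ⟨h.trans (pow_le_pow_right_of_le_one' hγ.le hk.2),
      pow_lt_one₀ hγ0.le hγ (Nat.one_le_iff_ne_zero.1 hk.1)⟩
  have := Set.ncard_le_ncard_of_injOn _ hmaps (pow_right_strictAnti₀ hγ0 hγ).injective.injOn hfin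
  rw [Set.ncard_Icc_nat, add_tsub_cancel_right] at this
  omega

theorem pow_ne_of_forall_pow_lt (hπ : π < 1) (hgap : ∀ γ < 1, γ ^ n < π) (γ : Γ₀) :
    γ ^ n ≠ π := by
  rintro rfl
  refine (hgap γ ?_).false
  by_contra! hγ
  exact (one_le_pow₀ hγ).not_gt hπ

theorem mul_pow_lt_one_iff (hπ : π < 1) (hgap : ∀ γ < 1, γ ^ n < π) {γ : Γ₀} :
    π * γ ^ n < 1 ↔ γ ≤ 1 := by
  refine ⟨fun h => ?_, fun hγ => mul_lt_one_of_lt_of_le hπ (pow_le_one' hγ n)⟩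
  by_contra! hγ
  have hγn := hgap γ⁻¹ (inv_lt_one_of_one_lt₀ hγ)
  rw [inv_pow, inv_lt_iff_one_lt_mul₀ (pow_pos (zero_lt_one.trans hγ) n)] at hγn
  exact h.not_gt hγn

theorem inv_mul_pow_lt_one_iff (hπ : π < 1) (hgap : ∀ γ < 1, γ ^ n < π) {γ : Γ₀} :
    π⁻¹ * γ ^ n < 1 ↔ γ < 1 := by
  have hπ0 : 0 < π := zero_le.trans_lt (hgap 0 zero_lt_one)
  rw [inv_mul_lt_iff₀ hπ0, mul_one]
  refine ⟨fun h => ?_, hgap γ⟩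
  by_contra! hγ
  exact (one_le_pow₀ hγ).not_gt (h.trans hπ)

end PowersBelowOne

theorem IsLocalRing.isUnit_natCast_of_coprime {R : Type*} [CommRing R] [IsLocalRing R]
    {n p : ℕ} (hp : (p : R) ∈ maximalIdeal R) (h : n.Coprime p) : IsUnit (n : R) :=
  notMem_maximalIdeal.1 fun hn => Ideal.IsPrime.notMem_of_isCoprime_of_mem h.cast hn hp

theorem HenselianLocalRing.exists_pow_eq_of_sub_one_mem {R : Type*} [CommRing R]
    [HenselianLocalRing R] {n : ℕ} (hn : IsUnit (n : R)) {b : R} (hb : b - 1 ∈ maximalIdeal R) :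
    ∃ a : R, a ^ n = b := by
  have hn0 : n ≠ 0 := by rintro rfl; simp at hn
  obtain ⟨a, ha, -⟩ := HenselianLocalRing.is_henselian (X ^ n - C b) (monic_X_pow_sub_C b hn0) 1
    (by simpa using neg_mem hb) (by simpa [derivative_X_pow] using hn)
  exact ⟨a, by simpa [sub_eq_zero] using ha⟩

namespace Valuation

variable {K Γ₀ : Type*} [Field K] [LinearOrderedCommGroupWithZero Γ₀] (v : Valuation K Γ₀)
  {n : ℕ}

theorem exists_pow_eq_one_add_of_lt_one [HenselianLocalRing v.valuationSubring]
    (hn : IsUnit (n : v.valuationSubring)) {c : K} (hc : v c < 1) : ∃ y : K, y ^ n = 1 + c := by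
  have h1c : 1 + c ∈ v.valuationSubring := (v.map_add _ _).trans (max_le v.map_one.le hc.le)
  obtain ⟨a, ha⟩ := HenselianLocalRing.exists_pow_eq_of_sub_one_mem hn (b := ⟨1 + c, h1c⟩)
    (v.mem_maximalIdeal_iff.2 (by simpa using hc))
  exact ⟨a, by simpa using congrArg Subtype.val ha⟩

theorem map_mul_pow_lt_one_of_pow_eq_one_add {a x y : K} (ha : ∀ γ, γ ^ n ≠ v a)
    (hy : y ^ n = 1 + a * x ^ n) : v (a * x ^ n) < 1 := by
  rcases lt_trichotomy (v (a * x ^ n)) 1 with hlt | heq | hgt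
  · exact hlt
  · rw [map_mul, map_pow] at heq
    exact absurd (by rw [eq_inv_of_mul_eq_one_left heq, inv_pow]) (ha (v x)⁻¹)
  · have hvy : v y ^ n = v a * v x ^ n := by
      rw [← map_pow, hy, map_add_eq_of_lt_right _ (by rwa [map_one]), map_mul, map_pow]
    rw [map_mul, map_pow] at hgt
    have hx : v x ^ n ≠ 0 := right_ne_zero_of_mul (zero_lt_one.trans hgt).ne'
    exact absurd (by rw [div_pow, eq_div_of_mul_eq hx hvy.symm]) (ha (v y / v x))

theorem exists_pow_eq_one_add_mul_pow_iff [HenselianLocalRing v.valuationSubring]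
    (hn : IsUnit (n : v.valuationSubring)) {a : K} (ha : ∀ γ, γ ^ n ≠ v a) {x : K} :
    (∃ y, y ^ n = 1 + a * x ^ n) ↔ v (a * x ^ n) < 1 :=
  ⟨fun ⟨_, hy⟩ => v.map_mul_pow_lt_one_of_pow_eq_one_add ha hy,
    v.exists_pow_eq_one_add_of_lt_one hn⟩

end Valuation

/-- **Robinson's formula for finitely ramified henselian valued fields**
(Remark `Robdef`).  Let `n > e` be coprime to `p`.  In any finitely ramified henselian
valued field `(K,v)` of mixed characteristic `(0,p)` with initial ramification `e`,
the valuation ring is `{x : ∃ y, yⁿ = 1 + p xⁿ}` and the maximal ideal is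
`{x : ∃ y, yⁿ = 1 + p⁻¹ xⁿ}`. -/
theorem robinson_formula_finitely_ramified
    {K Γ₀ : Type*} [Field K] [LinearOrderedCommGroupWithZero Γ₀] [CharZero K]
    (v : Valuation K Γ₀) [HenselianLocalRing ↥(v.valuationSubring)]
    (p e n : ℕ) (hp : p.Prime) (hvp : v (p : K) < 1)
    (hfin : {γ : Γ₀ | v (p : K) ≤ γ ∧ γ < 1}.Finite)
    (hcard : {γ : Γ₀ | v (p : K) ≤ γ ∧ γ < 1}.ncard = e)
    (hne : e < n) (hnp : Nat.Coprime n p) :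
    {x : K | ∃ y : K, y ^ n = 1 + (p : K) * x ^ n} = {x : K | v x ≤ 1} ∧
    {x : K | ∃ y : K, y ^ n = 1 + (p : K)⁻¹ * x ^ n} = {x : K | v x < 1} := by
  have hπ : v (p : K) ≠ 0 := v.ne_zero_iff.2 (Nat.cast_ne_zero.2 hp.ne_zero)
  have hgap : ∀ γ < 1, γ ^ n < v (p : K) := fun γ => pow_lt_of_ncard_Ico_lt hπ hfin (hcard ▸ hne)
  have hn : IsUnit (n : v.valuationSubring) :=
    isUnit_natCast_of_coprime (v.mem_maximalIdeal_iff.2 (by simpa using hvp)) hnp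
  have hpow : ∀ γ : Γ₀, γ ^ n ≠ v (p : K) := pow_ne_of_forall_pow_lt hvp hgap
  have hpow_inv : ∀ γ : Γ₀, γ ^ n ≠ v (p : K)⁻¹ := fun γ h =>
    hpow γ⁻¹ (by rw [inv_pow, h, map_inv₀, inv_inv])
  constructor <;> ext x <;> simp only [Set.mem_ofPred_eq]
  · rw [v.exists_pow_eq_one_add_mul_pow_iff hn hpow, map_mul, map_pow,
      mul_pow_lt_one_iff hvp hgap]
  · rw [v.exists_pow_eq_one_add_mul_pow_iff hn hpow_inv, map_mul, map_inv₀, map_pow,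
      inv_mul_pow_lt_one_iff hvp hgap]
end
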